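/- Let ξ_1,…,ξ_n and η_1,…,η_n be random variables such that all of ξ_1,…,ξ_n, η_1,…,η_n are mutually independent, each ξ_i and each η_i is symmetric (i.e. distributed as its negative), and suppose there is a constant c ≥ 1 such that for every i and every t > 0: P(|ξ_i| ≥ t) ≤ c · P(c|η_i| ≥ t). Then for every convex function f : ℝⁿ → ℝ (for which the expectations below are finite): E f(ξ_1,…,ξ_n) ≤ E f(c² η_1,…, c² η_n). -/

import Mathlib

/-!
Call `μ ≼ ν` when `∫ g dμ ≤ ∫ g dν` for every nonnegative convex `g`. This relation passes to
products by Tonelli, swapping one factor at a time, so by independence it suffices to compare the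
laws of `ξᵢ` and `c² ηᵢ`. For a symmetric law, `E g = E G + g 0`, where
`G x = (g x + g (-x)) / 2 - g 0` is convex, even, nonnegative and zero at `0`. Hence `G` is
nondecreasing in `|x|`, its superlevel sets in `|x|` are half-lines `[s, ∞)` with `s > 0`, and the
layer-cake formula turns the tail bound into `E G(ξᵢ) ≤ c E G(c ηᵢ)`. Finally, convexity and
`G 0 = 0` give `c G(c x) ≤ G(c² x)`. The same identity `E f = E F + f 0`, for the centered even
part `F` of `f`, moves the comparison back to `f` itself.
-/

open MeasureTheory ProbabilityTheory Set
open scoped ENNReal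

theorem ConvexOn.continuous_of_univ {E : Type*} [NormedAddCommGroup E] [NormedSpace ℝ E]
    [FiniteDimensional ℝ E] {g : E → ℝ} (hg : ConvexOn ℝ univ g) : Continuous g :=
  continuousOn_univ.mp (hg.continuousOn isOpen_univ)

theorem ConvexOn.monotoneOn_Ici_of_even {G : ℝ → ℝ} (hG : ConvexOn ℝ univ G)
    (heven : ∀ x, G (-x) = G x) : MonotoneOn G (Ici 0) := by
  intro a ha b _ hab
  have hmem : a ∈ segment ℝ (-b) b := by
    rw [segment_eq_Icc (by linarith [mem_Ici.mp ha])]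
    exact ⟨by linarith [mem_Ici.mp ha], hab⟩
  simpa [heven] using hG.le_on_segment (mem_univ _) (mem_univ _) hmem

theorem ConvexOn.mul_apply_le_apply_smul {E : Type*} [AddCommGroup E] [Module ℝ E]
    {G : E → ℝ} (hG : ConvexOn ℝ univ G) (hG0 : G 0 ≤ 0) {t : ℝ} (ht : 1 ≤ t) (x : E) :
    t * G x ≤ G (t • x) := by
  have ht0 : 0 < t := by linarith
  have h := hG.2 (mem_univ (t • x)) (mem_univ 0) (inv_nonneg.mpr ht0.le)
    (sub_nonneg.mpr (inv_le_one_of_one_le₀ ht)) (add_sub_cancel _ _)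
  rw [smul_zero, add_zero, smul_smul, inv_mul_cancel₀ ht0.ne', one_smul, smul_eq_mul,
    smul_eq_mul] at h
  have h' : G x ≤ t⁻¹ * G (t • x) := by
    linarith [mul_nonpos_of_nonneg_of_nonpos (sub_nonneg.mpr (inv_le_one_of_one_le₀ ht)) hG0]
  calc t * G x ≤ t * (t⁻¹ * G (t • x)) := by gcongr
    _ = G (t • x) := by field_simp

namespace MeasureTheory.Measure

variable {Ω α : Type*} [MeasurableSpace Ω] [MeasurableSpace α] [InvolutiveNeg α] [MeasurableNeg α]

theorem isNegInvariant_map_iff {μ : Measure Ω} {X : Ω → α} (hX : Measurable X) :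
    (μ.map X).IsNegInvariant ↔ μ.map (fun ω => -X ω) = μ.map X := by
  have h : (μ.map X).neg = μ.map (fun ω => -X ω) := map_map measurable_neg hX
  exact ⟨fun hinv => h ▸ hinv.neg_eq_self, fun hmap => ⟨h.trans hmap⟩⟩

theorem IsNegInvariant.map {μ : Measure α} [μ.IsNegInvariant] {f : α → α} (hf : Measurable f)
    (hodd : ∀ x, f (-x) = -f x) : (μ.map f).IsNegInvariant := by
  have h : μ.map (fun x => f (-x)) = (μ.map Neg.neg).map f := (map_map hf measurable_neg).symm
  rw [isNegInvariant_map_iff hf]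
  simp_rw [← hodd]
  rw [h, map_neg_eq_self]

end MeasureTheory.Measure

section CenteredEvenPart

variable {E : Type*} [AddCommGroup E]

noncomputable def centeredEvenPart (g : E → ℝ) (x : E) : ℝ := (g x + g (-x)) / 2 - g 0

@[simp]
theorem centeredEvenPart_neg (g : E → ℝ) (x : E) :
    centeredEvenPart g (-x) = centeredEvenPart g x := by
  simp only [centeredEvenPart, neg_neg, add_comm]

@[simp]
theorem centeredEvenPart_zero (g : E → ℝ) : centeredEvenPart g 0 = 0 := by
  simp [centeredEvenPart]

theorem ConvexOn.centeredEvenPart [Module ℝ E] {g : E → ℝ} (hg : ConvexOn ℝ univ g) :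
    ConvexOn ℝ univ (centeredEvenPart g) := by
  have hneg : ConvexOn ℝ univ fun x => g (-x) := hg.comp_linearMap (-LinearMap.id)
  refine (((hg.add hneg).smul (by norm_num : (0 : ℝ) ≤ 1 / 2)).add_const (-g 0)).congr
    fun x _ => ?_
  simp only [_root_.centeredEvenPart, Pi.add_apply, smul_eq_mul]
  ring

theorem centeredEvenPart_nonneg [Module ℝ E] {g : E → ℝ} (hg : ConvexOn ℝ univ g) (x : E) :
    0 ≤ centeredEvenPart g x := by
  have h := hg.2 (mem_univ x) (mem_univ (-x)) (by norm_num : (0 : ℝ) ≤ 1 / 2)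
    (by norm_num : (0 : ℝ) ≤ 1 / 2) (by norm_num)
  rw [← smul_add, add_neg_cancel, smul_zero, smul_eq_mul, smul_eq_mul] at h
  simp only [centeredEvenPart]
  linarith

variable [MeasurableSpace E] [MeasurableNeg E] {μ : Measure E} [μ.IsNegInvariant]
  [IsProbabilityMeasure μ] {g : E → ℝ}

theorem lintegral_ofReal_eq_lintegral_centeredEvenPart_add (hg : Measurable g)
    (hg0 : ∀ x, 0 ≤ g x) (hG0 : ∀ x, 0 ≤ centeredEvenPart g x) :
    ∫⁻ x, ENNReal.ofReal (g x) ∂μ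
      = ∫⁻ x, ENNReal.ofReal (centeredEvenPart g x) ∂μ + ENNReal.ofReal (g 0) := by
  have hpt (x : E) : ENNReal.ofReal (g x) + ENNReal.ofReal (g (-x))
      = 2 * (ENNReal.ofReal (centeredEvenPart g x) + ENNReal.ofReal (g 0)) := by
    rw [← ENNReal.ofReal_add (hg0 x) (hg0 (-x)), ← ENNReal.ofReal_add (hG0 x) (hg0 0),
      ← ENNReal.ofReal_ofNat 2, ← ENNReal.ofReal_mul (by norm_num)]
    congr 1
    simp only [_root_.centeredEvenPart]
    ring
  refine (ENNReal.mul_right_inj (a := 2) (by norm_num) (by norm_num)).mp ?_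
  calc 2 * ∫⁻ x, ENNReal.ofReal (g x) ∂μ
      = ∫⁻ x, ENNReal.ofReal (g x) ∂μ + ∫⁻ x, ENNReal.ofReal (g (-x)) ∂μ := by
        rw [two_mul, lintegral_neg_eq_self fun x => ENNReal.ofReal (g x)]
    _ = ∫⁻ x, 2 * (ENNReal.ofReal (centeredEvenPart g x) + ENNReal.ofReal (g 0)) ∂μ := by
        rw [← lintegral_add_left hg.ennreal_ofReal]
        exact lintegral_congr hpt
    _ = 2 * (∫⁻ x, ENNReal.ofReal (centeredEvenPart g x) ∂μ + ENNReal.ofReal (g 0)) := by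
        rw [lintegral_const_mul' _ _ ENNReal.ofNat_ne_top, lintegral_add_right _ measurable_const,
          lintegral_const, measure_univ, mul_one]

theorem integral_centeredEvenPart (hg : Integrable g μ) :
    ∫ x, centeredEvenPart g x ∂μ = ∫ x, g x ∂μ - g 0 := by
  have hsum : Integrable (fun x => g x + g (-x)) μ := hg.add hg.comp_neg
  simp only [_root_.centeredEvenPart]
  rw [integral_sub (hsum.div_const 2) (integrable_const _), integral_div,
    integral_add hg hg.comp_neg, integral_neg_eq_self, integral_const, probReal_univ, one_smul]
  ring

end CenteredEvenPart

section ConvexOrder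

variable {E F : Type*} [NormedAddCommGroup E] [NormedSpace ℝ E] [MeasurableSpace E]
  [NormedAddCommGroup F] [NormedSpace ℝ F] [MeasurableSpace F]

/-- The relation `μ ≼ ν`; lower integrals make sense of it without integrability assumptions. -/
def ConvexOrderLE (μ ν : Measure E) : Prop :=
  ∀ g : E → ℝ, ConvexOn ℝ univ g → (∀ x, 0 ≤ g x) →
    ∫⁻ x, ENNReal.ofReal (g x) ∂μ ≤ ∫⁻ x, ENNReal.ofReal (g x) ∂ν

theorem ConvexOrderLE.map [OpensMeasurableSpace E] [FiniteDimensional ℝ F] [BorelSpace F]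
    {μ ν : Measure E} (h : ConvexOrderLE μ ν) (L : E →L[ℝ] F) :
    ConvexOrderLE (μ.map L) (ν.map L) := by
  intro g hg hg0
  have hgm := hg.continuous_of_univ.measurable.ennreal_ofReal
  rw [lintegral_map hgm L.measurable, lintegral_map hgm L.measurable]
  exact h _ (hg.comp_linearMap (L : E →ₗ[ℝ] F)) fun x => hg0 _

theorem ConvexOrderLE.prod [FiniteDimensional ℝ E] [BorelSpace E] [FiniteDimensional ℝ F]
    [BorelSpace F] {μ μ' : Measure E} {ν ν' : Measure F} [SFinite μ] [SFinite μ'] [SFinite ν]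
    [SFinite ν'] (hμ : ConvexOrderLE μ μ') (hν : ConvexOrderLE ν ν') :
    ConvexOrderLE (μ.prod ν) (μ'.prod ν') := by
  intro g hg hg0
  have hgm := hg.continuous_of_univ.measurable.ennreal_ofReal
  have hslice₁ (x : E) : ConvexOn ℝ univ fun y => g (x, y) := by
    convert (hg.translate_right (x, 0)).comp_linearMap (LinearMap.inr ℝ E F) using 1 <;>
      ext <;> simp
  have hslice₂ (y : F) : ConvexOn ℝ univ fun x => g (x, y) := by
    convert (hg.translate_right (0, y)).comp_linearMap (LinearMap.inl ℝ E F) using 1 <;>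
      ext <;> simp
  calc ∫⁻ p, ENNReal.ofReal (g p) ∂μ.prod ν
      = ∫⁻ x, ∫⁻ y, ENNReal.ofReal (g (x, y)) ∂ν ∂μ := lintegral_prod _ hgm.aemeasurable
    _ ≤ ∫⁻ x, ∫⁻ y, ENNReal.ofReal (g (x, y)) ∂ν' ∂μ :=
        lintegral_mono fun x => hν _ (hslice₁ x) fun _ => hg0 _
    _ = ∫⁻ y, ∫⁻ x, ENNReal.ofReal (g (x, y)) ∂μ ∂ν' :=
        lintegral_lintegral_swap (hgm.comp measurable_id).aemeasurable
    _ ≤ ∫⁻ y, ∫⁻ x, ENNReal.ofReal (g (x, y)) ∂μ' ∂ν' :=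
        lintegral_mono fun y => hμ _ (hslice₂ y) fun _ => hg0 _
    _ = ∫⁻ p, ENNReal.ofReal (g p) ∂μ'.prod ν' := (lintegral_prod_symm _ hgm.aemeasurable).symm

theorem MeasureTheory.Measure.pi_fin_succ_eq_map_cons {n : ℕ} (m : Fin (n + 1) → Measure E)
    [∀ i, SigmaFinite (m i)] :
    Measure.pi m = ((m 0).prod (Measure.pi fun i => m i.succ)).map
      ((Fin.consEquivL ℝ fun _ : Fin (n + 1) => E) : E × (Fin n → E) →L[ℝ] Fin (n + 1) → E) := by
  rw [← (measurePreserving_piFinSuccAbove m 0).symm.map_eq]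
  congr 1
  ext p i
  simp

theorem ConvexOrderLE.pi [FiniteDimensional ℝ E] [BorelSpace E] {n : ℕ}
    {m m' : Fin n → Measure E} [∀ i, SigmaFinite (m i)] [∀ i, SigmaFinite (m' i)]
    (h : ∀ i, ConvexOrderLE (m i) (m' i)) : ConvexOrderLE (Measure.pi m) (Measure.pi m') := by
  induction n with
  | zero =>
    rw [Measure.pi_of_empty m, Measure.pi_of_empty m']
    exact fun _ _ _ => le_rfl
  | succ n ih =>
    rw [Measure.pi_fin_succ_eq_map_cons m, Measure.pi_fin_succ_eq_map_cons m']
    exact ((h 0).prod (ih fun i => h i.succ)).map _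

theorem ConvexOrderLE.integral_le [FiniteDimensional ℝ E] [BorelSpace E] {μ ν : Measure E}
    [IsProbabilityMeasure μ] [IsProbabilityMeasure ν] [μ.IsNegInvariant] [ν.IsNegInvariant]
    (h : ConvexOrderLE μ ν) {f : E → ℝ} (hf : ConvexOn ℝ univ f) (hfμ : Integrable f μ)
    (hfν : Integrable f ν) : ∫ x, f x ∂μ ≤ ∫ x, f x ∂ν := by
  have hFc := hf.centeredEvenPart.continuous_of_univ
  have hF : ∫ x, centeredEvenPart f x ∂μ ≤ ∫ x, centeredEvenPart f x ∂ν := by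
    rw [integral_eq_lintegral_of_nonneg_ae (ae_of_all _ (centeredEvenPart_nonneg hf))
        hFc.aestronglyMeasurable,
      integral_eq_lintegral_of_nonneg_ae (ae_of_all _ (centeredEvenPart_nonneg hf))
        hFc.aestronglyMeasurable]
    have hFν : Integrable (centeredEvenPart f) ν :=
      ((hfν.add hfν.comp_neg).div_const 2).sub (integrable_const _)
    exact ENNReal.toReal_mono hFν.lintegral_lt_top.ne
      (h _ hf.centeredEvenPart (centeredEvenPart_nonneg hf))
  linarith [integral_centeredEvenPart hfμ, integral_centeredEvenPart hfν]

theorem ConvexOrderLE.integral_comp_le [FiniteDimensional ℝ E] [BorelSpace E] {P Q : Measure E}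
    [P.IsNegInvariant] [Q.IsNegInvariant] (h : ConvexOrderLE P Q) {Ω : Type*}
    [MeasurableSpace Ω] {μ : Measure Ω} [IsProbabilityMeasure μ] {X Y : Ω → E}
    (hX : Measurable X) (hY : Measurable Y) (hXP : μ.map X = P) (hYQ : μ.map Y = Q)
    {f : E → ℝ} (hf : ConvexOn ℝ univ f) (hfX : Integrable (fun ω => f (X ω)) μ)
    (hfY : Integrable (fun ω => f (Y ω)) μ) : ∫ ω, f (X ω) ∂μ ≤ ∫ ω, f (Y ω) ∂μ := by
  subst hXP hYQ
  have := Measure.isProbabilityMeasure_map (μ := μ) hX.aemeasurable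
  have := Measure.isProbabilityMeasure_map (μ := μ) hY.aemeasurable
  have hfc := hf.continuous_of_univ
  rw [← integral_map hX.aemeasurable hfc.aestronglyMeasurable,
    ← integral_map hY.aemeasurable hfc.aestronglyMeasurable]
  exact h.integral_le hf
    ((integrable_map_measure hfc.aestronglyMeasurable hX.aemeasurable).mpr hfX)
    ((integrable_map_measure hfc.aestronglyMeasurable hY.aemeasurable).mpr hfY)

end ConvexOrder

theorem measure_le_mul_of_isUpperSet_of_isClosed {μ ν : Measure ℝ} {C : ℝ≥0∞}
    (h : ∀ t, 0 < t → μ (Ici t) ≤ C * ν (Ici t)) {S : Set ℝ} (hS : IsUpperSet S)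
    (hSc : IsClosed S) (h0 : 0 ∉ S) : μ S ≤ C * ν S := by
  rcases S.eq_empty_or_nonempty with rfl | hne
  · simp
  have hbdd : BddBelow S := ⟨0, fun x hx => le_of_not_ge fun hx0 => h0 (hS hx0 hx)⟩
  have hmin : sInf S ∈ S := hSc.csInf_mem hne hbdd
  have hS_eq : S = Ici (sInf S) :=
    Subset.antisymm (fun x hx => csInf_le hbdd hx) (hS.Ici_subset hmin)
  rw [hS_eq]
  exact h _ (lt_of_not_ge fun hle => h0 (hS hle hmin))

theorem lintegral_le_mul_of_measure_Ici_le {μ ν : Measure ℝ} {C : ℝ≥0∞}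
    (h : ∀ t, 0 < t → μ (Ici t) ≤ C * ν (Ici t)) {H : ℝ → ℝ} (hH : Monotone H)
    (hHc : Continuous H) (hH0 : H 0 = 0) (hHnn : ∀ u, 0 ≤ H u) :
    ∫⁻ u, ENNReal.ofReal (H u) ∂μ ≤ C * ∫⁻ u, ENNReal.ofReal (H u) ∂ν := by
  have hanti : Antitone fun s => ν {u | s ≤ H u} := fun a b hab =>
    measure_mono fun u hu => hab.trans hu
  rw [lintegral_eq_lintegral_meas_le μ (ae_of_all _ hHnn) hHc.measurable.aemeasurable,
    lintegral_eq_lintegral_meas_le ν (ae_of_all _ hHnn) hHc.measurable.aemeasurable,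
    ← lintegral_const_mul _ hanti.measurable]
  refine setLIntegral_mono (measurable_const.mul hanti.measurable) fun s hs => ?_
  refine measure_le_mul_of_isUpperSet_of_isClosed h (fun a b hab ha => ha.trans (hH hab))
    (isClosed_le continuous_const hHc) ?_
  simpa [hH0] using hs

theorem convexOrderLE_map_mul_of_tail_le {μ ν : Measure ℝ} [IsProbabilityMeasure μ]
    [IsProbabilityMeasure ν] [μ.IsNegInvariant] [ν.IsNegInvariant] {c : ℝ} (hc : 1 ≤ c)
    (htail : ∀ t, 0 < t → μ {x | t ≤ |x|} ≤ ENNReal.ofReal c * ν {x | t ≤ c * |x|}) :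
    ConvexOrderLE μ (ν.map (c ^ 2 * ·)) := by
  intro g hg hg0
  have hc0 : 0 < c := by linarith
  set G := centeredEvenPart g with hGdef
  have hGconv : ConvexOn ℝ univ G := hg.centeredEvenPart
  have hGc : Continuous G := hGconv.continuous_of_univ
  have hGnn : ∀ x, 0 ≤ G x := centeredEvenPart_nonneg hg
  have hGmono : MonotoneOn G (Ici 0) := hGconv.monotoneOn_Ici_of_even (centeredEvenPart_neg g)
  have hGabs (x : ℝ) : G |x| = G x := by
    rcases abs_choice x with h | h <;> rw [h]
    exact centeredEvenPart_neg g x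
  set H : ℝ → ℝ := fun u => G (max u 0) with hHdef
  have hH (x : ℝ) : H |x| = G x := by simp only [hHdef, max_eq_left (abs_nonneg x), hGabs]
  have hHmono : Monotone H := fun a b hab =>
    hGmono (le_max_right a 0) (le_max_right b 0) (max_le_max hab le_rfl)
  have hHc : Continuous H := hGc.comp (continuous_id.max continuous_const)
  have hscale : Measurable (c ^ 2 * · : ℝ → ℝ) := measurable_const_mul _
  have := Measure.isProbabilityMeasure_map (μ := ν) hscale.aemeasurable
  have : (ν.map (c ^ 2 * ·)).IsNegInvariant :=
    Measure.IsNegInvariant.map hscale fun x => mul_neg _ _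
  have habs_meas : Measurable fun x : ℝ => c * |x| := measurable_abs.const_mul c
  have htail' (t : ℝ) (ht : 0 < t) :
      μ.map abs (Ici t) ≤ ENNReal.ofReal c * ν.map (fun x => c * |x|) (Ici t) := by
    rw [Measure.map_apply measurable_abs measurableSet_Ici,
      Measure.map_apply habs_meas measurableSet_Ici]
    exact htail t ht
  have hgm := hg.continuous_of_univ.measurable
  rw [lintegral_ofReal_eq_lintegral_centeredEvenPart_add hgm hg0 hGnn,
    lintegral_ofReal_eq_lintegral_centeredEvenPart_add hgm hg0 hGnn,
    lintegral_map hGc.measurable.ennreal_ofReal hscale]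
  gcongr ?_ + _
  calc ∫⁻ x, ENNReal.ofReal (G x) ∂μ = ∫⁻ u, ENNReal.ofReal (H u) ∂μ.map abs := by
        rw [lintegral_map hHc.measurable.ennreal_ofReal measurable_abs]
        simp only [hH]
    _ ≤ ENNReal.ofReal c * ∫⁻ u, ENNReal.ofReal (H u) ∂ν.map (fun x => c * |x|) :=
        lintegral_le_mul_of_measure_Ici_le htail' hHmono hHc (by simp [hHdef, hGdef])
          fun _ => hGnn _
    _ = ∫⁻ x, ENNReal.ofReal c * ENNReal.ofReal (G (c * x)) ∂ν := by
        rw [lintegral_map hHc.measurable.ennreal_ofReal habs_meas,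
          ← lintegral_const_mul' _ _ ENNReal.ofReal_ne_top]
        have hcx (x : ℝ) : c * |x| = |c * x| := by rw [abs_mul, abs_of_pos hc0]
        simp only [hcx, hH]
    _ ≤ ∫⁻ x, ENNReal.ofReal (G (c ^ 2 * x)) ∂ν := by
        refine lintegral_mono fun x => ?_
        rw [← ENNReal.ofReal_mul hc0.le, sq, mul_assoc]
        exact ENNReal.ofReal_le_ofReal
          (hGconv.mul_apply_le_apply_smul (centeredEvenPart_zero g).le hc (c * x))

/-- Lemma 2.4, contraction principle: comparison of expectations of
convex functions under a tail-domination assumption. -/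
theorem contraction_principle {Ω : Type*} [MeasurableSpace Ω] (μ : Measure Ω)
    [IsProbabilityMeasure μ] (n : ℕ) (ξ η : Fin n → Ω → ℝ)
    (hξm : ∀ i, Measurable (ξ i)) (hηm : ∀ i, Measurable (η i))
    -- all of ξ₁,…,ξₙ,η₁,…,ηₙ are mutually independent
    (hindep : iIndepFun (Sum.elim ξ η) μ)
    -- each ξᵢ and each ηᵢ is symmetric
    (hξsymm : ∀ i, Measure.map (ξ i) μ = Measure.map (fun ω => -(ξ i ω)) μ)
    (hηsymm : ∀ i, Measure.map (η i) μ = Measure.map (fun ω => -(η i ω)) μ)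
    (c : ℝ) (hc : 1 ≤ c)
    -- tail comparison: P(|ξᵢ| ≥ t) ≤ c P(c|ηᵢ| ≥ t) for all t > 0
    (htail : ∀ i, ∀ t : ℝ, 0 < t →
      (μ {ω | t ≤ |ξ i ω|}).toReal ≤ c * (μ {ω | t ≤ c * |η i ω|}).toReal)
    (f : (Fin n → ℝ) → ℝ) (hf : ConvexOn ℝ Set.univ f)
    -- the expectations below are assumed finite
    (hint₁ : Integrable (fun ω => f fun i => ξ i ω) μ)
    (hint₂ : Integrable (fun ω => f fun i => c ^ 2 * η i ω) μ) :
    (∫ ω, f (fun i => ξ i ω) ∂μ) ≤ ∫ ω, f (fun i => c ^ 2 * η i ω) ∂μ := by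
  have hscale : Measurable (c ^ 2 * · : ℝ → ℝ) := measurable_const_mul _
  have _ (i : Fin n) := Measure.isProbabilityMeasure_map (μ := μ) (hξm i).aemeasurable
  have _ (i : Fin n) := Measure.isProbabilityMeasure_map (μ := μ) (hηm i).aemeasurable
  have _ (i : Fin n) := (Measure.isNegInvariant_map_iff (hξm i)).mpr (hξsymm i).symm
  have _ (i : Fin n) := (Measure.isNegInvariant_map_iff (hηm i)).mpr (hηsymm i).symm
  have _ (i : Fin n) : ((μ.map (η i)).map (c ^ 2 * ·)).IsNegInvariant :=
    Measure.IsNegInvariant.map hscale fun x => mul_neg _ _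
  have hlaw_ξ : μ.map (fun ω i => ξ i ω) = Measure.pi fun i => μ.map (ξ i) :=
    (hindep.precomp (g := Sum.inl) Sum.inl_injective).map_fun_eq_pi_map
      fun i => (hξm i).aemeasurable
  have hlaw_η : μ.map (fun ω i => c ^ 2 * η i ω)
      = Measure.pi fun i => (μ.map (η i)).map (c ^ 2 * ·) := by
    simp_rw [Measure.map_map hscale (hηm _)]
    exact ((hindep.precomp (g := Sum.inr) Sum.inr_injective).comp _ fun _ => hscale
      ).map_fun_eq_pi_map fun i => (hscale.comp (hηm i)).aemeasurable
  have htail' (i : Fin n) (t : ℝ) (ht : 0 < t) : μ.map (ξ i) {x | t ≤ |x|}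
      ≤ ENNReal.ofReal c * μ.map (η i) {x | t ≤ c * |x|} := by
    rw [Measure.map_apply (hξm i) (measurableSet_le measurable_const measurable_abs),
      Measure.map_apply (hηm i) (measurableSet_le measurable_const (measurable_abs.const_mul c))]
    refine (ENNReal.toReal_le_toReal (measure_ne_top _ _) (by finiteness)).mp ?_
    rw [ENNReal.toReal_mul, ENNReal.toReal_ofReal (by linarith)]
    exact htail i t ht
  exact (ConvexOrderLE.pi fun i => convexOrderLE_map_mul_of_tail_le hc (htail' i)).integral_comp_le
    (measurable_pi_lambda _ hξm) (measurable_pi_lambda _ fun i => hscale.comp (hηm i))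
    hlaw_ξ hlaw_η hf hint₁ hint₂
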